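/- arXiv:1709.09439 — 2 statements merged into one kernel-verified Lean document; each statement's English description precedes it below -/
import Mathlib

section
/- Let $N = U \oplus \langle 2n \rangle$, and identify $\Omega^+(N)$ with the upper half plane $\mathfrak{h}$ via $z \mapsto [-nz^2 : 1 : z]$. A point $z \in \mathfrak{h}$ is orthogonal to some $\delta \in N$ with $\delta^2 = -2$ (i.e. lies in the set removed to form $\Omega_0^+(N)$) if and only if $z = \frac{c}{b} + \frac{i}{b\sqrt{n}}$ for some $c \in \mathbb{Z}$ and $b \in \mathbb{Z}_{>0}$ with $b \mid nc^2 + 1$. -/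
/-!
Multiplying the orthogonality relation by `-b` and using `ab + nc² = -1` turns it into
`n (bz - c)² = -1`, i.e. `(√n (bz - c))² = i²`. Since `ab + nc² = -1` forces `b ≠ 0`,
replacing `δ` by `-δ` we may take `b > 0`; then `Im z > 0` picks the root
`√n (bz - c) = i`, which is `z = c/b + i/(b√n)`, and `b ∣ nc² + 1` with quotient `-a`.
Conversely `a := -(nc² + 1)/b` gives a `(-2)`-class orthogonal to that point.
-/

theorem ne_zero_of_mul_add_mul_sq_eq_neg_one {R : Type*} [Ring R] [LinearOrder R]
    [IsStrictOrderedRing R] {a b c n : R} (hn : 0 ≤ n) (h : a * b + n * c ^ 2 = -1) : b ≠ 0 := by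
  rintro rfl
  rw [mul_zero, zero_add] at h
  exact not_le.mpr neg_one_lt_zero (h ▸ mul_nonneg hn (sq_nonneg c))

theorem pairing_eq_zero_iff_of_mul_add_mul_sq_eq_neg_one {K : Type*} [Field K]
    {n z a b c : K} (hb : b ≠ 0) (hδ : a * b + n * c ^ 2 = -1) :
    -n * z ^ 2 * b + a + 2 * n * c * z = 0 ↔ n * (b * z - c) ^ 2 = -1 := by
  have key : -b * (-n * z ^ 2 * b + a + 2 * n * c * z) = n * (b * z - c) ^ 2 + 1 := by
    linear_combination -hδ
  rw [← mul_right_inj' (neg_ne_zero.mpr hb), key, mul_zero, add_eq_zero_iff_eq_neg]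

theorem eq_div_add_div_mul_iff {K : Type*} [Field K] {z b c s w : K} (hb : b ≠ 0)
    (hs : s ≠ 0) : z = c / b + w / (b * s) ↔ s * (b * z - c) = w := by
  rw [div_add_div _ _ hb (mul_ne_zero hb hs), eq_div_iff (mul_ne_zero hb (mul_ne_zero hb hs))]
  constructor <;> intro h
  · apply mul_left_cancel₀ hb
    linear_combination h
  · linear_combination b * h

theorem Complex.sq_eq_neg_one_iff_of_im_pos {w : ℂ} (him : 0 < w.im) : w ^ 2 = -1 ↔ w = I := by
  refine ⟨fun hw => ?_, fun hw => hw ▸ I_sq⟩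
  rw [← I_sq, sq_eq_sq_iff_eq_or_eq_neg] at hw
  rcases hw with h | h
  · exact h
  · rw [h, neg_im, I_im] at him
    norm_num at him

theorem Complex.ofReal_sqrt_mul_sq {x : ℝ} (hx : 0 ≤ x) (w : ℂ) :
    ((Real.sqrt x : ℂ) * w) ^ 2 = x * w ^ 2 := by
  rw [mul_pow, ← ofReal_pow, Real.sq_sqrt hx]

theorem pairing_eq_zero_iff_eq_div_add_div {n : ℕ} (hn : 0 < n) {z : ℂ} (hz : 0 < z.im)
    {a b c : ℤ} (hb : 0 < b) (hδ : a * b + (n : ℤ) * c ^ 2 = -1) :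
    -(n : ℂ) * z ^ 2 * b + a + 2 * n * c * z = 0 ↔
      z = c / b + Complex.I / (b * (Real.sqrt n : ℝ)) := by
  have hs_pos : 0 < Real.sqrt n := Real.sqrt_pos.mpr (by exact_mod_cast hn)
  have hbC : (b : ℂ) ≠ 0 := by exact_mod_cast hb.ne'
  have hδC : (a : ℂ) * b + (n : ℂ) * c ^ 2 = -1 := by exact_mod_cast hδ
  have him : 0 < ((Real.sqrt n : ℂ) * (b * z - c)).im := by
    simp only [Complex.mul_im, Complex.ofReal_re, Complex.ofReal_im, Complex.sub_im,
      Complex.intCast_re, Complex.intCast_im, zero_mul, add_zero, sub_zero]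
    exact mul_pos hs_pos (mul_pos (by exact_mod_cast hb) hz)
  rw [pairing_eq_zero_iff_of_mul_add_mul_sq_eq_neg_one hbC hδC,
    eq_div_add_div_mul_iff hbC (Complex.ofReal_ne_zero.mpr hs_pos.ne'),
    ← Complex.sq_eq_neg_one_iff_of_im_pos him, Complex.ofReal_sqrt_mul_sq n.cast_nonneg,
    Complex.ofReal_natCast]

/-- `N = U ⊕ ⟨2n⟩` with pairing `((a₁,b₁,c₁),(a₂,b₂,c₂)) = a₁b₂ + a₂b₁ + 2n c₁c₂`;
the point `z` of the upper half plane corresponds to the line spanned by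
`Ω_z = (-nz², 1, z)`. A `(-2)`-class is `δ = (a,b,c) ∈ ℤ³` with
`2ab + 2nc² = -2`, i.e. `ab + nc² = -1`; orthogonality to `δ` means
`(Ω_z, δ) = -nz²·b + a + 2nz·c = 0`.

Claim: `z ∈ 𝔥` is orthogonal to some `(-2)`-class of `N` if and only if
`z = c/b + i/(b√n)` with `c ∈ ℤ`, `b ∈ ℤ_{>0}`, `b ∣ nc² + 1`. -/
theorem orthogonal_to_minus_two_class_iff (n : ℕ) (hn : 0 < n)
    (z : ℂ) (hz : 0 < z.im) :
    (∃ a b c : ℤ, a * b + (n : ℤ) * c ^ 2 = -1 ∧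
        -(n : ℂ) * z ^ 2 * (b : ℂ) + (a : ℂ) + 2 * (n : ℂ) * (c : ℂ) * z = 0) ↔
    (∃ c b : ℤ, 0 < b ∧ b ∣ ((n : ℤ) * c ^ 2 + 1) ∧
        z = (c : ℂ) / (b : ℂ) + Complex.I / ((b : ℂ) * (Real.sqrt n : ℝ))) := by
  constructor
  · rintro ⟨a, b, c, hδ, horth⟩
    wlog hb : 0 < b generalizing a b c
    · have hb0 := ne_zero_of_mul_add_mul_sq_eq_neg_one (Int.natCast_nonneg n) hδ
      exact this (-a) (-b) (-c) (by linear_combination hδ) (by push_cast; linear_combination -horth)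
        (by omega)
    exact ⟨c, b, hb, ⟨-a, by linear_combination hδ⟩,
      (pairing_eq_zero_iff_eq_div_add_div hn hz hb hδ).mp horth⟩
  · rintro ⟨c, b, hb, ⟨k, hk⟩, hzb⟩
    have hδ : -k * b + (n : ℤ) * c ^ 2 = -1 := by linear_combination hk
    exact ⟨-k, b, c, hδ, by exact_mod_cast (pairing_eq_zero_iff_eq_div_add_div hn hz hb hδ).mpr hzb⟩
end

section
/- The set $\{\frac{c}{b} + \frac{i}{b\sqrt{n}} : c \in \mathbb{Z}, b \in \mathbb{Z}_{>0}, b \mid nc^2 + 1\}$ is an infinite, closed, discrete subset of the upper half plane $\mathfrak{h}$, for any positive integer $n$. -/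
/-!
The point `c/b + i/(b√n)` has real part `c/b` and imaginary part `1/(b√n) ≤ 1/b`. Hence in a
region `{ε ≤ Im z, |Re z| ≤ R}` only the finitely many pairs with `b ≤ 1/ε` and `|c| ≤ R/ε`
contribute, so the set is locally finite in `𝔥`, which makes it closed in `𝔥` and discrete.
It is infinite because `b = 1` is allowed for every `c`.
-/

/-- The set `{c/b + i/(b√n) : c ∈ ℤ, b ∈ ℤ_{>0}, b ∣ nc² + 1}` in the upper half
plane. -/
def specialPoints (n : ℕ) : Set ℂ :=
  {z | ∃ c b : ℤ, 0 < b ∧ b ∣ ((n : ℤ) * c ^ 2 + 1) ∧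
    z = (c : ℂ) / (b : ℂ) + Complex.I / ((b : ℂ) * (Real.sqrt n : ℝ))}

open Filter Topology Set

theorem isClosed_preimage_val_and_isDiscrete_of_locallyFinite {X : Type*} [TopologicalSpace X]
    [T1Space X] {U S : Set X} (hSU : S ⊆ U) (h : ∀ x ∈ U, ∃ t ∈ 𝓝 x, (t ∩ S).Finite) :
    IsClosed ((↑) ⁻¹' S : Set U) ∧ IsDiscrete S := by
  have hcodiscrete : U \ S ∈ codiscreteWithin U := by
    rwa [codiscreteWithin_iff_locallyFiniteComplementWithin, sdiff_sdiff_cancel_left hSU]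
  constructor
  · refine (compl_mem_codiscrete_iff.mp ?_).1
    rwa [mem_codiscrete_subtype_iff_mem_codiscreteWithin, image_compl_preimage, Subtype.range_coe]
  · simpa [inter_eq_left.mpr hSU] using
      isDiscrete_of_codiscreteWithin (mem_of_superset hcodiscrete (sdiff_subset_compl _ _))

noncomputable def specialPoint (n : ℕ) (c b : ℤ) : ℂ :=
  (c : ℂ) / (b : ℂ) + Complex.I / ((b : ℂ) * (Real.sqrt n : ℝ))

theorem specialPoints_eq (n : ℕ) :
    specialPoints n = {z | ∃ c b : ℤ, 0 < b ∧ b ∣ ((n : ℤ) * c ^ 2 + 1) ∧ z = specialPoint n c b} :=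
  rfl

theorem specialPoint_re (n : ℕ) (c b : ℤ) : (specialPoint n c b).re = c / b := by
  have : ((c : ℂ) / b) = ((c / b : ℝ) : ℂ) := by push_cast; rfl
  rw [specialPoint, Complex.add_re, this, Complex.ofReal_re]
  simp [Complex.div_re]

theorem specialPoint_im (n : ℕ) (c b : ℤ) : (specialPoint n c b).im = (b * Real.sqrt n)⁻¹ := by
  simp [specialPoint, Complex.div_im, Complex.normSq]

theorem specialPoint_im_pos {n : ℕ} (hn : 0 < n) {c b : ℤ} (hb : 0 < b) :
    0 < (specialPoint n c b).im := by
  rw [specialPoint_im]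
  have hsqrt : 0 < Real.sqrt n := Real.sqrt_pos.2 (by exact_mod_cast hn)
  have hb' : (0 : ℝ) < b := by exact_mod_cast hb
  positivity

theorem injective_specialPoint_one (n : ℕ) : Function.Injective (specialPoint n · 1) := by
  intro c c' h
  simpa [specialPoint_re] using congrArg Complex.re h

theorem le_inv_of_le_specialPoint_im {n : ℕ} (hn : 0 < n) {c b : ℤ} (hb : 0 < b) {ε : ℝ}
    (hε : 0 < ε) (h : ε ≤ (specialPoint n c b).im) : (b : ℝ) ≤ ε⁻¹ := by
  have hb' : (0 : ℝ) < b := by exact_mod_cast hb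
  have hsqrt : 1 ≤ Real.sqrt n := Real.one_le_sqrt.2 (by exact_mod_cast hn)
  rw [specialPoint_im] at h
  calc (b : ℝ) ≤ b * Real.sqrt n := le_mul_of_one_le_right hb'.le hsqrt
    _ ≤ ε⁻¹ := (le_inv_comm₀ hε (by positivity)).1 h

theorem finite_setOf_le_im_abs_re_le_inter_specialPoints {n : ℕ} (hn : 0 < n) {ε : ℝ}
    (hε : 0 < ε) (R : ℝ) :
    ({z : ℂ | ε ≤ z.im ∧ |z.re| ≤ R} ∩ specialPoints n).Finite := by
  obtain ⟨B, hB⟩ := exists_nat_ge ε⁻¹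
  obtain ⟨C, hC⟩ := exists_nat_ge (B * R)
  refine ((Set.finite_Icc ((-C, 1) : ℤ × ℤ) (C, B)).image
    fun p ↦ specialPoint n p.1 p.2).subset ?_
  rw [specialPoints_eq]
  rintro _ ⟨⟨him, hre⟩, c, b, hb, -, rfl⟩
  have hb' : (0 : ℝ) < b := by exact_mod_cast hb
  have hbB : (b : ℝ) ≤ B := (le_inv_of_le_specialPoint_im hn hb hε him).trans hB
  have hR : 0 ≤ R := (abs_nonneg _).trans hre
  rw [specialPoint_re, abs_div, abs_of_pos hb', div_le_iff₀ hb'] at hre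
  have hcC : |(c : ℝ)| ≤ C := calc
    |(c : ℝ)| ≤ R * b := hre
    _ ≤ R * B := by gcongr
    _ ≤ C := by linarith
  obtain ⟨hc₁, hc₂⟩ := abs_le.1 hcC
  exact ⟨(c, b), ⟨⟨by exact_mod_cast hc₁, hb⟩, by exact_mod_cast hc₂, by exact_mod_cast hbB⟩, rfl⟩

theorem setOf_le_im_abs_re_le_mem_nhds {x : ℂ} {ε R : ℝ} (hε : ε < x.im) (hR : |x.re| < R) :
    {z : ℂ | ε ≤ z.im ∧ |z.re| ≤ R} ∈ 𝓝 x :=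
  (Complex.continuous_im.continuousAt.eventually (Ici_mem_nhds hε)).and
    ((continuous_abs.comp Complex.continuous_re).continuousAt.eventually (Iic_mem_nhds hR))

theorem specialPoints_subset_upperHalfPlane {n : ℕ} (hn : 0 < n) :
    specialPoints n ⊆ {z : ℂ | 0 < z.im} := by
  rintro _ ⟨c, b, hb, -, rfl⟩
  exact specialPoint_im_pos hn hb

theorem specialPoints_infinite (n : ℕ) : (specialPoints n).Infinite :=
  Set.infinite_of_injective_forall_mem (injective_specialPoint_one n)
    fun c ↦ ⟨c, 1, one_pos, one_dvd _, rfl⟩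

theorem specialPoints_locallyFinite {n : ℕ} (hn : 0 < n) {x : ℂ} (hx : 0 < x.im) :
    ∃ t ∈ 𝓝 x, (t ∩ specialPoints n).Finite :=
  ⟨_, setOf_le_im_abs_re_le_mem_nhds (half_lt_self hx) (lt_add_one _),
    finite_setOf_le_im_abs_re_le_inter_specialPoints hn (half_pos hx) _⟩

/-- For any positive integer `n`, the set
`{c/b + i/(b√n) : c ∈ ℤ, b ∈ ℤ_{>0}, b ∣ nc² + 1}` is an infinite subset of the
upper half plane `𝔥`, closed in `𝔥` (with the subspace topology from `ℂ`), and
discrete. -/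
theorem specialPoints_infinite_closed_discrete (n : ℕ) (hn : 0 < n) :
    (specialPoints n).Infinite ∧
    (∀ z ∈ specialPoints n, 0 < z.im) ∧
    IsClosed ((fun w : {z : ℂ // 0 < z.im} => (w : ℂ)) ⁻¹' specialPoints n) ∧
    DiscreteTopology ↥(specialPoints n) := by
  obtain ⟨hclosed, hdiscrete⟩ := isClosed_preimage_val_and_isDiscrete_of_locallyFinite
    (specialPoints_subset_upperHalfPlane hn) fun _ ↦ specialPoints_locallyFinite hn
  exact ⟨specialPoints_infinite n, specialPoints_subset_upperHalfPlane hn, hclosed,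
    hdiscrete.to_subtype⟩
end
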